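/- (The Exp3 uncertainty set is contained in a CVaR uncertainty set.) Let m ≥ 1 and γ ∈ [0,1], and set α = 1/((1−γ)m + γ). Define U^Exp3 = { p ∈ Δ_m : p_i ≥ γ/m for all i } and U^CVaR_α = { p ∈ Δ_m : ‖p‖_∞ ≤ 1/(α m) }. Then 1/(α m) = 1 − (m−1)γ/m and U^Exp3 ⊆ U^CVaR_α; consequently, for every loss vector ℓ ∈ ℝ^m, sup_{p ∈ U^Exp3} Σ_{i=1}^m p_i ℓ_i ≤ sup_{p ∈ U^CVaR_α} Σ_{i=1}^m p_i ℓ_i. -/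
import Mathlib


/-- The Exp3 uncertainty set is contained in a CVaR uncertainty set:
for `γ ∈ [0,1]` and `α = 1/((1−γ)m + γ)`, we have `1/(αm) = 1 − (m−1)γ/m`, the set
`U^Exp3 = {p ∈ Δ_m : p_i ≥ γ/m ∀i}` is contained in
`U^CVaR_α = {p ∈ Δ_m : ‖p‖_∞ ≤ 1/(αm)}`, and consequently for every loss vector `ℓ`,
`sup_{p ∈ U^Exp3} ∑_i p_i ℓ_i ≤ sup_{p ∈ U^CVaR_α} ∑_i p_i ℓ_i`. -/
theorem stmt_14 (m : ℕ) (hm : 1 ≤ m) (γ : ℝ) (hγ : γ ∈ Set.Icc (0 : ℝ) 1)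
    (α : ℝ) (hα : α = 1 / ((1 - γ) * m + γ)) :
    1 / (α * m) = 1 - ((m : ℝ) - 1) * γ / m ∧
    {p : Fin m → ℝ | (∀ i, 0 ≤ p i) ∧ (∑ i, p i) = 1 ∧ ∀ i, γ / m ≤ p i} ⊆
      {p : Fin m → ℝ | (∀ i, 0 ≤ p i) ∧ (∑ i, p i) = 1 ∧ ∀ i, p i ≤ 1 / (α * m)} ∧
    ∀ ℓ : Fin m → ℝ,
      sSup {v : ℝ | ∃ p : Fin m → ℝ,
          ((∀ i, 0 ≤ p i) ∧ (∑ i, p i) = 1 ∧ ∀ i, γ / m ≤ p i) ∧ v = ∑ i, p i * ℓ i}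
        ≤ sSup {v : ℝ | ∃ p : Fin m → ℝ,
          ((∀ i, 0 ≤ p i) ∧ (∑ i, p i) = 1 ∧ ∀ i, p i ≤ 1 / (α * m)) ∧
            v = ∑ i, p i * ℓ i} := by
  obtain ⟨hγ0, hγ1⟩ := hγ
  have hm0 : (0 : ℝ) < m := by exact_mod_cast Nat.pos_of_ne_zero (by omega)
  have hm1 : (1 : ℝ) ≤ m := by exact_mod_cast hm
  have hD : (0 : ℝ) < (1 - γ) * m + γ := by nlinarith
  have h1 : 1 / (α * m) = 1 - ((m : ℝ) - 1) * γ / m := by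
    rw [hα]; field_simp; ring
  have hsub : {p : Fin m → ℝ | (∀ i, 0 ≤ p i) ∧ (∑ i, p i) = 1 ∧ ∀ i, γ / m ≤ p i} ⊆
      {p : Fin m → ℝ | (∀ i, 0 ≤ p i) ∧ (∑ i, p i) = 1 ∧ ∀ i, p i ≤ 1 / (α * m)} := by
    rintro p ⟨h0, hs, hl⟩
    refine ⟨h0, hs, fun i => ?_⟩
    rw [h1]
    have hsum : ∑ j ∈ Finset.univ.erase i, (γ / m) ≤ ∑ j ∈ Finset.univ.erase i, p j :=
      Finset.sum_le_sum fun j _ => hl j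
    have hcard : (Finset.univ.erase i).card = m - 1 := by
      simp [Finset.card_erase_of_mem]
    have hconst : ∑ _j ∈ Finset.univ.erase i, (γ / m) = ((m : ℝ) - 1) * (γ / m) := by
      rw [Finset.sum_const, hcard, nsmul_eq_mul]
      congr 1
      push_cast [Nat.cast_sub hm]
      ring
    have hsplit : ∑ j ∈ Finset.univ.erase i, p j + p i = 1 := by
      rw [Finset.sum_erase_add _ _ (Finset.mem_univ i)]; exact hs
    rw [hconst] at hsum
    have : ((m : ℝ) - 1) * γ / m = ((m : ℝ) - 1) * (γ / m) := by ring
    linarith [hsum, hsplit, this ▸ le_refl (((m : ℝ) - 1) * γ / m)]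
  refine ⟨h1, hsub, fun ℓ => ?_⟩
  apply csSup_le_csSup
  · refine ⟨∑ i, |ℓ i|, ?_⟩
    rintro v ⟨p, ⟨h0, hs, _⟩, rfl⟩
    apply Finset.sum_le_sum
    intro i _
    have hple : p i ≤ 1 := by
      have := Finset.single_le_sum (fun j _ => h0 j) (Finset.mem_univ i)
      linarith [hs ▸ this]
    calc p i * ℓ i ≤ p i * |ℓ i| := by
          exact mul_le_mul_of_nonneg_left (le_abs_self _) (h0 i)
      _ ≤ 1 * |ℓ i| := mul_le_mul_of_nonneg_right hple (abs_nonneg _)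
      _ = |ℓ i| := one_mul _
  · refine ⟨∑ i, (1 / (m : ℝ)) * ℓ i, fun _ => 1 / m, ⟨?_, ?_, ?_⟩, rfl⟩
    · intro i; positivity
    · rw [Finset.sum_const, Finset.card_univ, Fintype.card_fin, nsmul_eq_mul]
      field_simp
    · intro i
      exact (div_le_div_iff_of_pos_right hm0).mpr hγ1
  · rintro v ⟨p, hp, rfl⟩
    exact ⟨p, hsub hp, rfl⟩
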